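/- Consider a two-layer linear model f(x) = W2·W1·x with W2 ∈ R^{1×m}, W1 = (W_s, W_n) ∈ R^{m×(d_s+d_n)}, trained by gradient flow on the population squared loss over data with x_s ~ N(y v, σ²I), x_n ~ N(0, σ²I), y ∈ {−1,1} uniform, v ≠ 0. If at initialization W2ᵀW2 = W1W1ᵀ and the flow converges to a global minimum of the loss, then at the limit W_n = 0. -/

import Mathlib

open Matrix Finset

attribute [local instance] Matrix.normedAddCommGroup Matrix.normedSpace

/-- Second-moment matrix `E[x xᵀ] = blockdiag(v vᵀ + σ² I, σ² I)` of the
signal-plus-noise model. -/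
noncomputable def sigMat {ds dn : ℕ} (v : Fin ds → ℝ) (σ : ℝ) :
    Matrix (Fin ds ⊕ Fin dn) (Fin ds ⊕ Fin dn) ℝ :=
  Matrix.fromBlocks (vecMulVec v v + σ ^ 2 • 1) 0 0 (σ ^ 2 • 1)

/-- First-moment row vector `E[y xᵀ] = (vᵀ, 0)`. -/
noncomputable def muRow {ds dn : ℕ} (v : Fin ds → ℝ) :
    Matrix (Fin 1) (Fin ds ⊕ Fin dn) ℝ :=
  Matrix.replicateRow (Fin 1) (Sum.elim v 0)

/-- Population squared loss `E[(1/2)(W2 W1 x − y)²]` of the two-layer linear model,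
written in closed form via the moments of the signal-plus-noise distribution. -/
noncomputable def popLoss {m ds dn : ℕ} (v : Fin ds → ℝ) (σ : ℝ)
    (W1 : Matrix (Fin m) (Fin ds ⊕ Fin dn) ℝ) (W2 : Matrix (Fin 1) (Fin m) ℝ) : ℝ :=
  (1 / 2) * ((W2 * W1 * sigMat (dn := dn) v σ * (W2 * W1)ᵀ) 0 0)
    - ((W2 * W1 * (muRow (dn := dn) v)ᵀ) 0 0) + 1 / 2

/-! Gradient flow conserves `W2ᵀ W2 - W1 W1ᵀ`, so the limit is balanced: `W2ᵀ W2 = W1 W1ᵀ`.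
At a global minimum the end-to-end noise map `W2 W_n` vanishes, because replacing `W_n` by `0`
leaves the signal part of the loss unchanged and removes the noise variance
`σ²/2 ‖W2 W_n‖²`. For a balanced pair, `W2 x = 0` with `x` in the range of `W1` forces
`‖W1ᵀ x‖² = ‖W2 x‖² = 0`, hence `x = 0`; applied to the columns of `W_n` this gives `W_n = 0`. -/

open Filter Topology

theorem HasDerivAt.matrix_transpose {m n : Type*} [Fintype m] [Fintype n]
    {A : ℝ → Matrix m n ℝ} {A' : Matrix m n ℝ} {t : ℝ} (hA : HasDerivAt A A' t) :
    HasDerivAt (fun s => (A s)ᵀ) A'ᵀ t :=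
  hasDerivAt_pi.2 fun j => hasDerivAt_pi.2 fun i => hasDerivAt_pi.1 (hasDerivAt_pi.1 hA i) j

theorem HasDerivAt.matrix_mul {l m n : Type*} [Fintype l] [Fintype m] [Fintype n]
    {A : ℝ → Matrix l m ℝ} {B : ℝ → Matrix m n ℝ} {A' : Matrix l m ℝ} {B' : Matrix m n ℝ} {t : ℝ}
    (hA : HasDerivAt A A' t) (hB : HasDerivAt B B' t) :
    HasDerivAt (fun s => A s * B s) (A' * B t + A t * B') t := by
  refine hasDerivAt_pi.2 fun i => hasDerivAt_pi.2 fun k => ?_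
  simp only [Matrix.add_apply, mul_apply, ← Finset.sum_add_distrib]
  exact HasDerivAt.fun_sum fun j _ =>
    (hasDerivAt_pi.1 (hasDerivAt_pi.1 hA i) j).fun_mul (hasDerivAt_pi.1 (hasDerivAt_pi.1 hB j) k)

def IsBalanced {m n p : Type*} [Fintype n] [Fintype p] (W1 : Matrix m n ℝ)
    (W2 : Matrix p m ℝ) : Prop :=
  W2ᵀ * W2 = W1 * W1ᵀ

section GradientFlow

variable {m n p : Type*} [Fintype m] [Fintype n] [Fintype p]
  {W1 : ℝ → Matrix m n ℝ} {W2 : ℝ → Matrix p m ℝ} {E : ℝ → Matrix p n ℝ}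

theorem transpose_mul_self_sub_mul_transpose_eq_of_gradientFlow
    (h1 : ∀ t, 0 ≤ t → HasDerivAt W1 (-((W2 t)ᵀ * E t)) t)
    (h2 : ∀ t, 0 ≤ t → HasDerivAt W2 (-(E t * (W1 t)ᵀ)) t) {t : ℝ} (ht : 0 ≤ t) :
    (W2 t)ᵀ * W2 t - W1 t * (W1 t)ᵀ = (W2 0)ᵀ * W2 0 - W1 0 * (W1 0)ᵀ := by
  have hderiv : ∀ s, 0 ≤ s →
      HasDerivAt (fun s => (W2 s)ᵀ * W2 s - W1 s * (W1 s)ᵀ) 0 s := by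
    intro s hs
    refine (((h2 s hs).matrix_transpose.matrix_mul (h2 s hs)).fun_sub
      ((h1 s hs).matrix_mul (h1 s hs).matrix_transpose)).congr_deriv ?_
    simp only [transpose_neg, transpose_mul, transpose_transpose, Matrix.neg_mul,
      Matrix.mul_neg, Matrix.mul_assoc]
    abel
  exact constant_of_has_deriv_right_zero
    (fun s hs => (hderiv s hs.1).continuousAt.continuousWithinAt)
    (fun s hs => (hderiv s hs.1).hasDerivWithinAt) t ⟨ht, le_rfl⟩

theorem IsBalanced.of_gradientFlow_tendsto
    (h1 : ∀ t, 0 ≤ t → HasDerivAt W1 (-((W2 t)ᵀ * E t)) t)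
    (h2 : ∀ t, 0 ≤ t → HasDerivAt W2 (-(E t * (W1 t)ᵀ)) t)
    (h0 : IsBalanced (W1 0) (W2 0)) {W1lim : Matrix m n ℝ} {W2lim : Matrix p m ℝ}
    (hlim1 : Tendsto W1 atTop (𝓝 W1lim)) (hlim2 : Tendsto W2 atTop (𝓝 W2lim)) :
    IsBalanced W1lim W2lim := by
  have hcont : Continuous fun W : Matrix m n ℝ × Matrix p m ℝ =>
      W.2ᵀ * W.2 - W.1 * W.1ᵀ := by fun_prop
  have hlim := (hcont.tendsto (W1lim, W2lim)).comp (hlim1.prodMk_nhds hlim2)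
  have hzero : (fun t => (W2 t)ᵀ * W2 t - W1 t * (W1 t)ᵀ) =ᶠ[atTop] fun _ => 0 := by
    filter_upwards [eventually_ge_atTop 0] with t ht
    rw [transpose_mul_self_sub_mul_transpose_eq_of_gradientFlow h1 h2 ht, h0, sub_self]
  exact sub_eq_zero.1 (tendsto_nhds_unique hlim (tendsto_const_nhds.congr' hzero.symm))

end GradientFlow

theorem IsBalanced.mul_eq_zero_of_mul_mul_eq_zero {m n p q : Type*}
    [Fintype m] [Fintype n] [Fintype p]
    {W1 : Matrix m n ℝ} {W2 : Matrix p m ℝ} (h : IsBalanced W1 W2) {B : Matrix n q ℝ}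
    (hB : W2 * (W1 * B) = 0) : W1 * B = 0 := by
  have : W1 * W1ᴴ * (W1 * B) = 0 := by
    rw [conjTranspose_eq_transpose_of_trivial, ← h, Matrix.mul_assoc, hB, Matrix.mul_zero]
  rwa [self_mul_conjTranspose_mul_eq_zero, ← Matrix.mul_assoc,
    conjTranspose_mul_self_mul_eq_zero] at this

theorem Matrix.mul_fromRows_zero_one {R m n₁ n₂ : Type*} [Semiring R] [Fintype n₁] [Fintype n₂]
    [DecidableEq n₂] (A : Matrix m (n₁ ⊕ n₂) R) :
    A * (fromRows 0 1 : Matrix (n₁ ⊕ n₂) n₂ R) = A.toCols₂ := by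
  conv_lhs => rw [← fromCols_toCols A]
  rw [fromCols_mul_fromRows, Matrix.mul_zero, Matrix.mul_one, zero_add]

section Loss

variable {m ds dn : ℕ} {v : Fin ds → ℝ} {σ : ℝ}

theorem muRow_eq_fromCols : muRow (dn := dn) v = fromCols (replicateRow (Fin 1) v) 0 := by
  ext _ (_ | _) <;> rfl

theorem popLoss_fromCols (Ws : Matrix (Fin m) (Fin ds) ℝ) (Wn : Matrix (Fin m) (Fin dn) ℝ)
    (W2 : Matrix (Fin 1) (Fin m) ℝ) :
    popLoss v σ (fromCols Ws Wn) W2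
      = popLoss v σ (fromCols Ws (0 : Matrix (Fin m) (Fin dn) ℝ)) W2
        + σ ^ 2 / 2 * trace (W2 * Wn * (W2 * Wn)ᵀ) := by
  simp only [popLoss, sigMat, muRow_eq_fromCols, mul_fromCols, fromCols_mul_fromBlocks,
    transpose_fromCols, fromCols_mul_fromRows, trace_fin_one, transpose_mul, transpose_zero,
    transpose_replicateRow, Matrix.mul_zero, Matrix.mul_one, Matrix.mul_smul, smul_mul, smul_zero,
    add_zero, zero_add, Matrix.add_apply, Matrix.smul_apply, Matrix.zero_apply, smul_eq_mul,
    one_div]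
  ring

theorem mul_toCols₂_eq_zero_of_forall_popLoss_le (hσ : σ ≠ 0)
    {W1 : Matrix (Fin m) (Fin ds ⊕ Fin dn) ℝ} {W2 : Matrix (Fin 1) (Fin m) ℝ}
    (hmin : ∀ (A : Matrix (Fin m) (Fin ds ⊕ Fin dn) ℝ) (B : Matrix (Fin 1) (Fin m) ℝ),
      popLoss v σ W1 W2 ≤ popLoss v σ A B) : W2 * W1.toCols₂ = 0 := by
  obtain ⟨Ws, Wn, rfl⟩ : ∃ Ws Wn, W1 = fromCols Ws Wn := ⟨_, _, (fromCols_toCols W1).symm⟩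
  have hle := hmin (fromCols Ws 0) W2
  rw [popLoss_fromCols] at hle
  have htrace : trace (W2 * Wn * (W2 * Wn)ᴴ) = 0 := by
    have hnonneg := (posSemidef_self_mul_conjTranspose (W2 * Wn)).trace_nonneg
    rw [conjTranspose_eq_transpose_of_trivial] at hnonneg ⊢
    rw [add_le_iff_nonpos_right] at hle
    exact le_antisymm (nonpos_of_mul_nonpos_right hle (by positivity)) hnonneg
  rwa [trace_mul_conjTranspose_self_eq_zero_iff] at htrace

end Loss

theorem pruning_noise_weights_vanish_general {m ds dn : ℕ}
    (v : Fin ds → ℝ) (σ : ℝ) (hσ : 0 < σ)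
    (W1 : ℝ → Matrix (Fin m) (Fin ds ⊕ Fin dn) ℝ)
    (W2 : ℝ → Matrix (Fin 1) (Fin m) ℝ)
    (hflow1 : ∀ t : ℝ, 0 ≤ t → HasDerivAt W1
      (-((W2 t)ᵀ * (W2 t * W1 t * sigMat (dn := dn) v σ - muRow (dn := dn) v))) t)
    (hflow2 : ∀ t : ℝ, 0 ≤ t → HasDerivAt W2
      (-((W2 t * W1 t * sigMat (dn := dn) v σ - muRow (dn := dn) v) * (W1 t)ᵀ)) t)
    (hbal0 : (W2 0)ᵀ * W2 0 = W1 0 * (W1 0)ᵀ)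
    (W1lim : Matrix (Fin m) (Fin ds ⊕ Fin dn) ℝ)
    (W2lim : Matrix (Fin 1) (Fin m) ℝ)
    (hlim1 : Filter.Tendsto W1 Filter.atTop (nhds W1lim))
    (hlim2 : Filter.Tendsto W2 Filter.atTop (nhds W2lim))
    (hglobal : ∀ (A : Matrix (Fin m) (Fin ds ⊕ Fin dn) ℝ)
        (B : Matrix (Fin 1) (Fin m) ℝ),
      popLoss v σ W1lim W2lim ≤ popLoss v σ A B) :
    ∀ (i : Fin m) (j : Fin dn), W1lim i (Sum.inr j) = 0 := by
  have hbal : IsBalanced W1lim W2lim :=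
    IsBalanced.of_gradientFlow_tendsto hflow1 hflow2 hbal0 hlim1 hlim2
  have hnoise : W2lim * W1lim.toCols₂ = 0 :=
    mul_toCols₂_eq_zero_of_forall_popLoss_le hσ.ne' hglobal
  have hWn : W1lim.toCols₂ = 0 := by
    rw [← mul_fromRows_zero_one] at hnoise ⊢
    exact hbal.mul_eq_zero_of_mul_mul_eq_zero hnoise
  exact fun i j => congrFun₂ hWn i j

/-- If a balanced two-layer linear network trained by gradient flow on the population
squared loss of the signal-plus-noise model converges to a global minimum, then the
noise-block weights `W_n` vanish at the limit. -/
theorem pruning_noise_weights_vanish {m ds dn : ℕ}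
    (v : Fin ds → ℝ) (hv : v ≠ 0) (σ : ℝ) (hσ : 0 < σ)
    (W1 : ℝ → Matrix (Fin m) (Fin ds ⊕ Fin dn) ℝ)
    (W2 : ℝ → Matrix (Fin 1) (Fin m) ℝ)
    (hflow1 : ∀ t : ℝ, 0 ≤ t → HasDerivAt W1
      (-((W2 t)ᵀ * (W2 t * W1 t * sigMat (dn := dn) v σ - muRow (dn := dn) v))) t)
    (hflow2 : ∀ t : ℝ, 0 ≤ t → HasDerivAt W2
      (-((W2 t * W1 t * sigMat (dn := dn) v σ - muRow (dn := dn) v) * (W1 t)ᵀ)) t)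
    (hbal0 : (W2 0)ᵀ * W2 0 = W1 0 * (W1 0)ᵀ)
    (W1lim : Matrix (Fin m) (Fin ds ⊕ Fin dn) ℝ)
    (W2lim : Matrix (Fin 1) (Fin m) ℝ)
    (hlim1 : Filter.Tendsto W1 Filter.atTop (nhds W1lim))
    (hlim2 : Filter.Tendsto W2 Filter.atTop (nhds W2lim))
    (hglobal : ∀ (A : Matrix (Fin m) (Fin ds ⊕ Fin dn) ℝ)
        (B : Matrix (Fin 1) (Fin m) ℝ),
      popLoss v σ W1lim W2lim ≤ popLoss v σ A B) :
    ∀ (i : Fin m) (j : Fin dn), W1lim i (Sum.inr j) = 0 :=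
  pruning_noise_weights_vanish_general v σ hσ W1 W2 hflow1 hflow2 hbal0 W1lim W2lim hlim1 hlim2
    hglobal
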